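/- Let μ̄ ∈ P₂(ℝ^m) and let (Φ_t)_{t≥0} be a family of maps Φ_t : P₂(ℝ^m) → P₂(ℝ^m) with Φ_0 = id and Φ_{t+s} = Φ_t ∘ Φ_s for all s, t ≥ 0, and with Φ_t μ̄ = μ̄ for all t ≥ 0. Assume: (i) exponential entropy decay: there exist c, λ > 0 such that Ent(Φ_t ν | μ̄) ≤ c e^{−2λ t} Ent(ν | μ̄) for all t ≥ 0 and all ν ∈ P₂(ℝ^m); (ii) a Talagrand inequality: there is C₁ > 0 with W₂(ν, μ̄)² ≤ 4 C₁ Ent(ν | μ̄) for all ν ∈ P₂(ℝ^m); (iii) an entropy–Wasserstein regularization at time 1: there is c₁ > 0 with Ent(Φ_1 ν | μ̄) ≤ c₁ W₂(ν, μ̄)² for all ν ∈ P₂(ℝ^m); and (iv) short-time stability: there is c₀ > 0 with W₂(Φ_t ν, μ̄) ≤ c₀ W₂(ν, μ̄) for all t ∈ [0,1] and ν ∈ P₂(ℝ^m). Then there exists a constant c̃ > 0, depending only on c, λ, C₁, c₁, c₀, such that W₂(Φ_t ν, μ̄) ≤ c̃ e^{−λ t} W₂(ν, μ̄) for all t ≥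 0 and all ν ∈ P₂(ℝ^m). -/
import Mathlib


open MeasureTheory ProbabilityTheory
open scoped ENNReal NNReal

/-- `π` is a coupling of `μ` and `ν`. -/
def IsCoupling {α β : Type*} [MeasurableSpace α] [MeasurableSpace β]
    (π : Measure (α × β)) (μ : Measure α) (ν : Measure β) : Prop :=
  π.map Prod.fst = μ ∧ π.map Prod.snd = ν

/-- The squared `L²`-Wasserstein distance, as an extended nonnegative real. -/
noncomputable def W2sq {E : Type*} [MeasurableSpace E] [NormedAddCommGroup E]
    (μ ν : Measure E) : ℝ≥0∞ :=
  ⨅ (π : Measure (E × E)) (_ : IsCoupling π μ ν), ∫⁻ p, (‖p.1 - p.2‖₊ : ℝ≥0∞) ^ 2 ∂π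

/-- The `L²`-Wasserstein distance, as an extended nonnegative real. -/
noncomputable def W2 {E : Type*} [MeasurableSpace E] [NormedAddCommGroup E]
    (μ ν : Measure E) : ℝ≥0∞ := (W2sq μ ν) ^ (1 / 2 : ℝ)

/-- A probability measure with finite second moment (an element of `P₂`). -/
def MemP2 {E : Type*} [MeasurableSpace E] [NormedAddCommGroup E] (μ : Measure E) : Prop :=
  IsProbabilityMeasure μ ∧ ∫⁻ x, (‖x‖₊ : ℝ≥0∞) ^ 2 ∂μ < ∞

open Classical in
/-- The relative entropy `Ent(ν|μ) = ∫ log (dν/dμ) dν` if `ν ≪ μ` (and `+∞` otherwise). -/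
noncomputable def relEnt {E : Type*} [MeasurableSpace E] (ν μ : Measure E) : ℝ≥0∞ :=
  if ν ≪ μ ∧ Integrable (llr ν μ) ν then ENNReal.ofReal (∫ x, llr ν μ x ∂ν) else ∞

/-- Suppose `(Φ_t)` is a semigroup of maps on `P₂(ℝ^m)` fixing `μ̄`,
satisfying (i) exponential entropy decay with constants `c, λ`, (ii) a Talagrand inequality
with constant `C₁`, (iii) entropy–Wasserstein regularization at time `1` with constant `c₁`,
and (iv) short-time `W₂`-stability with constant `c₀`.  Then there is `c̃ > 0`, depending only
on `c, λ, C₁, c₁, c₀`, with `W₂(Φ_t ν, μ̄) ≤ c̃ e^{−λt} W₂(ν, μ̄)` for all `t ≥ 0`, `ν ∈ P₂`. -/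
theorem statement_10 (c lam C₁ c₁ c₀ : ℝ)
    (hc : 0 < c) (hlam : 0 < lam) (hC₁ : 0 < C₁) (hc₁ : 0 < c₁) (hc₀ : 0 < c₀) :
    ∃ ctilde : ℝ, 0 < ctilde ∧
      ∀ (m : ℕ) (μbar : Measure (EuclideanSpace ℝ (Fin m))), MemP2 μbar →
      ∀ Φ : ℝ → Measure (EuclideanSpace ℝ (Fin m)) → Measure (EuclideanSpace ℝ (Fin m)),
        -- Φ maps P₂ to P₂
        (∀ t : ℝ, 0 ≤ t → ∀ ν, MemP2 ν → MemP2 (Φ t ν)) →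
        -- Φ_0 = id
        (∀ ν, MemP2 ν → Φ 0 ν = ν) →
        -- semigroup property
        (∀ s t : ℝ, 0 ≤ s → 0 ≤ t → ∀ ν, MemP2 ν → Φ (t + s) ν = Φ t (Φ s ν)) →
        -- μ̄ is invariant
        (∀ t : ℝ, 0 ≤ t → Φ t μbar = μbar) →
        -- (i) exponential entropy decay
        (∀ t : ℝ, 0 ≤ t → ∀ ν, MemP2 ν →
          relEnt (Φ t ν) μbar ≤ ENNReal.ofReal (c * Real.exp (-2 * lam * t)) * relEnt ν μbar) →
        -- (ii) Talagrand inequality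
        (∀ ν, MemP2 ν → W2sq ν μbar ≤ ENNReal.ofReal (4 * C₁) * relEnt ν μbar) →
        -- (iii) entropy–Wasserstein regularization at time 1
        (∀ ν, MemP2 ν → relEnt (Φ 1 ν) μbar ≤ ENNReal.ofReal c₁ * W2sq ν μbar) →
        -- (iv) short-time stability
        (∀ t : ℝ, 0 ≤ t → t ≤ 1 → ∀ ν, MemP2 ν →
          W2 (Φ t ν) μbar ≤ ENNReal.ofReal c₀ * W2 ν μbar) →
        -- conclusion
        ∀ t : ℝ, 0 ≤ t → ∀ ν, MemP2 ν →
          W2 (Φ t ν) μbar ≤ ENNReal.ofReal (ctilde * Real.exp (-lam * t)) * W2 ν μbar := by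
  
  refine ⟨max (c₀ * Real.exp lam) (Real.sqrt (4 * C₁ * c * c₁) * Real.exp lam), ?_, ?_⟩
  · exact lt_max_of_lt_left (by positivity)
  intro m μbar hμ Φ hP2 h0 hsemi hinv hi hii hiii hiv t ht ν hν
  set ct := max (c₀ * Real.exp lam) (Real.sqrt (4 * C₁ * c * c₁) * Real.exp lam) with hct
  by_cases h1 : t ≤ 1
  · refine (hiv t ht h1 ν hν).trans ?_
    gcongr
    have he : Real.exp (-lam) ≤ Real.exp (-lam * t) :=
      Real.exp_le_exp.mpr (by nlinarith)
    have h2 : c₀ * Real.exp lam * Real.exp (-lam) ≤ ct * Real.exp (-lam * t) :=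
      mul_le_mul (le_max_left _ _) he (Real.exp_pos _).le
        (le_trans (by positivity) (le_max_left _ _))
    calc c₀ = c₀ * Real.exp lam * Real.exp (-lam) := by
            rw [mul_assoc, ← Real.exp_add]; simp
      _ ≤ ct * Real.exp (-lam * t) := h2
  · push_neg at h1
    set ν1 := Φ 1 ν with hν1def
    have hν1 : MemP2 ν1 := hP2 1 zero_le_one ν hν
    have hts : Φ t ν = Φ (t - 1) ν1 := by
      have := hsemi 1 (t - 1) zero_le_one (by linarith) ν hν
      simpa using this
    set K := (4 * C₁ * c * c₁) * Real.exp (-2 * lam * (t - 1)) with hK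
    have hKpos : 0 < K := by positivity
    have hA : W2sq (Φ t ν) μbar ≤ ENNReal.ofReal K * W2sq ν μbar := by
      have e1 : W2sq (Φ t ν) μbar ≤ ENNReal.ofReal (4 * C₁) * relEnt (Φ t ν) μbar :=
        hii _ (hP2 t ht ν hν)
      have e2 : relEnt (Φ t ν) μbar ≤
          ENNReal.ofReal (c * Real.exp (-2 * lam * (t - 1))) * relEnt ν1 μbar := by
        rw [hts]; exact hi (t - 1) (by linarith) ν1 hν1
      have e3 : relEnt ν1 μbar ≤ ENNReal.ofReal c₁ * W2sq ν μbar := hiii ν hν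
      calc W2sq (Φ t ν) μbar
          ≤ ENNReal.ofReal (4 * C₁) *
            (ENNReal.ofReal (c * Real.exp (-2 * lam * (t - 1))) *
              (ENNReal.ofReal c₁ * W2sq ν μbar)) := by
            refine e1.trans ?_
            gcongr
            exact e2.trans (by gcongr)
        _ = ENNReal.ofReal K * W2sq ν μbar := by
            rw [← mul_assoc, ← mul_assoc, ← ENNReal.ofReal_mul (by positivity),
              ← ENNReal.ofReal_mul (by positivity)]
            congr 1
            rw [hK]; ring
    have hB : W2 (Φ t ν) μbar ≤ ENNReal.ofReal (K ^ (1/2 : ℝ)) * W2 ν μbar := by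
      unfold W2
      calc (W2sq (Φ t ν) μbar) ^ (1/2 : ℝ)
          ≤ (ENNReal.ofReal K * W2sq ν μbar) ^ (1/2 : ℝ) :=
            ENNReal.rpow_le_rpow hA (by norm_num)
        _ = (ENNReal.ofReal K) ^ (1/2 : ℝ) * (W2sq ν μbar) ^ (1/2 : ℝ) :=
            ENNReal.mul_rpow_of_nonneg _ _ (by norm_num)
        _ = ENNReal.ofReal (K ^ (1/2 : ℝ)) * (W2sq ν μbar) ^ (1/2 : ℝ) := by
            rw [← ENNReal.ofReal_rpow_of_pos hKpos]
    refine hB.trans ?_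
    gcongr
    have hsq : K ^ (1/2 : ℝ) =
        Real.sqrt (4 * C₁ * c * c₁) * (Real.exp lam * Real.exp (-lam * t)) := by
      rw [← Real.sqrt_eq_rpow, hK, Real.sqrt_mul (by positivity), ← Real.exp_add,
        ← Real.exp_half]
      congr 2
      ring
    rw [hsq, ← mul_assoc]
    exact mul_le_mul_of_nonneg_right
      (by rw [← mul_assoc] at *; exact (le_max_right _ _)) (Real.exp_pos _).le
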